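/- Let r > 0, T > 0, λ ∈ ℝ and set ϖ = 1/(r²(1+r²)). Then there exists a C² function u : ℝ² → ℝ with u(t,θ+2π) = u(t,θ) for all (t,θ), not identically zero on [0,T]×ℝ, satisfying (1/(1+r²))∂²u/∂t² + (1/r²)∂²u/∂θ² + (ϖ + λ)u = 0 at every point of [0,T]×ℝ and the Robin conditions ∂u/∂t(0,θ) + u(0,θ) = 0 and ∂u/∂t(T,θ) + u(T,θ) = 0 for all θ, if and only if λ belongs to the set {(n² − 1)/r² : n ∈ ℕ, n ≥ 0} ∪ {m²π²/((1+r²)T²) + (n²(1+r²) − 1)/(r²(1+r²)) : m,n ∈ ℕ, m ≥ 1, n ≥ 0}. -/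

import Mathlib

/-!
Separation of variables. For an eigenfunction `u`, pair each slice `u t` with a mode
`cos (n θ + ψ)`: differentiating under the integral and integrating by parts twice in `θ`
(using periodicity) shows that this Fourier coefficient `v t` solves `v'' = c v` on `[0, T]` with
`v' + v = 0` at both ends, where `c = (1 + r²) (n² / r² - ϖ - λ)`. By Parseval some mode of the
nonzero slice `u t₀` has `v t₀ ≠ 0`. A solution with the Robin condition at `0` is proportional
to an explicit one (`cos - sin / μ`, `1 - t` or `cosh - sinh / μ` according to the sign of `c`),
and the Robin condition at `T` then forces `c = 1` or `c = -(m π / T)²` with `m ≥ 1`.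
Conversely, for such `c` the explicit solution times `cos (n θ)` is an eigenfunction.
-/

open Real Set Function MeasureTheory intervalIntegral

def SolvesSecondOrderOn (c : ℝ) (s : Set ℝ) (y y' : ℝ → ℝ) : Prop :=
  ∀ t ∈ s, HasDerivAt y (y' t) t ∧ HasDerivAt y' (c * y t) t

namespace SolvesSecondOrderOn

variable {c : ℝ} {s : Set ℝ} {y y' : ℝ → ℝ}

theorem mono {s' : Set ℝ} (h : SolvesSecondOrderOn c s y y') (hs : s' ⊆ s) :
    SolvesSecondOrderOn c s' y y' :=
  fun t ht => h t (hs ht)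

theorem const_mul (h : SolvesSecondOrderOn c s y y') (k : ℝ) :
    SolvesSecondOrderOn c s (fun t => k * y t) (fun t => k * y' t) := fun t ht =>
  ⟨(h t ht).1.const_mul k, ((h t ht).2.const_mul k).congr_deriv (by ring)⟩

theorem mul_const (h : SolvesSecondOrderOn c s y y') (k : ℝ) :
    SolvesSecondOrderOn c s (fun t => y t * k) (fun t => y' t * k) := by
  simpa only [mul_comm _ k] using h.const_mul k

theorem deriv_deriv (h : SolvesSecondOrderOn c univ y y') (t : ℝ) :
    deriv (deriv y) t = c * y t := by
  have hy : deriv y = y' := funext fun t => (h t trivial).1.deriv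
  rw [hy, (h t trivial).2.deriv]

theorem contDiff_two (h : SolvesSecondOrderOn c univ y y') : ContDiff ℝ 2 y := by
  have hy : deriv y = y' := funext fun t => (h t trivial).1.deriv
  have hy' : deriv y' = fun t => c * y t := funext fun t => (h t trivial).2.deriv
  have hdiff : Differentiable ℝ y := fun t => (h t trivial).1.differentiableAt
  rw [show (2 : WithTop ℕ∞) = 1 + 1 from rfl, contDiff_succ_iff_deriv, hy, contDiff_one_iff_deriv,
    hy']
  exact ⟨hdiff, by simp, fun t => (h t trivial).2.differentiableAt,
    continuous_const.mul hdiff.continuous⟩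

/-- Via the first-order system `(y, y')' = (y', c y)`, whose right-hand side is Lipschitz. -/
theorem eqOn {a b : ℝ} {z z' : ℝ → ℝ} (hy : SolvesSecondOrderOn c (Icc a b) y y')
    (hz : SolvesSecondOrderOn c (Icc a b) z z') (h₀ : y a = z a) (h₀' : y' a = z' a) :
    EqOn y z (Icc a b) ∧ EqOn y' z' (Icc a b) := by
  let V : ℝ × ℝ →L[ℝ] ℝ × ℝ :=
    (ContinuousLinearMap.snd ℝ ℝ ℝ).prod (c • ContinuousLinearMap.fst ℝ ℝ ℝ)
  have hsys : ∀ {y y' : ℝ → ℝ}, SolvesSecondOrderOn c (Icc a b) y y' →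
      ∀ t ∈ Icc a b, HasDerivAt (fun t => (y t, y' t)) (V (y t, y' t)) t :=
    fun h t ht => (h t ht).1.prodMk (h t ht).2
  have hsol := ODE_solution_unique_of_mem_Icc_right (v := fun _ => V) (s := fun _ => univ)
    (fun _ _ => V.lipschitz.lipschitzOnWith)
    (fun t ht => (hsys hy t ht).continuousAt.continuousWithinAt)
    (fun t ht => (hsys hy t (Ico_subset_Icc_self ht)).hasDerivWithinAt) (fun _ _ => trivial)
    (fun t ht => (hsys hz t ht).continuousAt.continuousWithinAt)
    (fun t ht => (hsys hz t (Ico_subset_Icc_self ht)).hasDerivWithinAt) (fun _ _ => trivial)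
    (Prod.ext h₀ h₀')
  exact ⟨fun t ht => congrArg Prod.fst (hsol ht), fun t ht => congrArg Prod.snd (hsol ht)⟩

/-- Two solutions with the Robin condition at `0` are proportional. -/
theorem robin_right_of_robin {T : ℝ} {φ φ' : ℝ → ℝ} (hφ : SolvesSecondOrderOn c (Icc 0 T) φ φ')
    (hφ₀ : φ 0 ≠ 0) (hφR : φ' 0 + φ 0 = 0) (hy : SolvesSecondOrderOn c (Icc 0 T) y y')
    (hy₀ : y' 0 + y 0 = 0) (hyT : y' T + y T = 0) (hne : ∃ t ∈ Icc 0 T, y t ≠ 0) :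
    φ' T + φ T = 0 := by
  obtain ⟨t₀, ht₀, hyt₀⟩ := hne
  set k := y 0 / φ 0
  obtain ⟨hy_eq, hy'_eq⟩ := hy.eqOn (hφ.const_mul k) (by simp [k, hφ₀])
    (by simp only [k]; field_simp; linear_combination φ 0 * hy₀ - y 0 * hφR)
  have hk : k ≠ 0 := fun hk => hyt₀ (by simp [hy_eq ht₀, hk])
  have hT : T ∈ Icc 0 T := ⟨ht₀.1.trans ht₀.2, le_rfl⟩
  have : k * (φ' T + φ T) = 0 := by
    rw [← hyT, hy_eq hT, hy'_eq hT]; ring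
  exact (mul_eq_zero.1 this).resolve_left hk

end SolvesSecondOrderOn

theorem solvesSecondOrderOn_cos (ω ψ : ℝ) :
    SolvesSecondOrderOn (-ω ^ 2) univ (fun t => cos (ω * t + ψ)) (fun t => -ω * sin (ω * t + ψ)) :=
  fun t _ => by
    have h := (((hasDerivAt_id t).const_mul ω).add_const ψ)
    simp only [id, mul_one] at h
    exact ⟨h.cos.congr_deriv (by ring), (h.sin.const_mul (-ω)).congr_deriv (by ring)⟩

theorem solvesSecondOrderOn_cos_sub_sin {μ : ℝ} (hμ : μ ≠ 0) :
    SolvesSecondOrderOn (-μ ^ 2) univ (fun t => cos (μ * t) - sin (μ * t) / μ)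
      (fun t => -μ * sin (μ * t) - cos (μ * t)) := fun t _ => by
  have h := (hasDerivAt_id t).const_mul μ
  simp only [id, mul_one] at h
  exact ⟨(h.cos.sub (h.sin.div_const μ)).congr_deriv (by field_simp),
    ((h.sin.const_mul (-μ)).sub h.cos).congr_deriv (by field_simp; ring)⟩

theorem solvesSecondOrderOn_cosh_sub_sinh {μ : ℝ} (hμ : μ ≠ 0) :
    SolvesSecondOrderOn (μ ^ 2) univ (fun t => cosh (μ * t) - sinh (μ * t) / μ)
      (fun t => μ * sinh (μ * t) - cosh (μ * t)) := fun t _ => by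
  have h := (hasDerivAt_id t).const_mul μ
  simp only [id, mul_one] at h
  exact ⟨(h.cosh.sub (h.sinh.div_const μ)).congr_deriv (by field_simp),
    ((h.sinh.const_mul μ).sub h.cosh).congr_deriv (by field_simp)⟩

theorem solvesSecondOrderOn_one_sub :
    SolvesSecondOrderOn 0 univ (fun t => 1 - t) (fun _ => -1) := fun t _ =>
  ⟨((hasDerivAt_id t).const_sub 1).congr_deriv (by simp),
    (hasDerivAt_const t (-1 : ℝ)).congr_deriv (by simp)⟩

/-- The values of `c` for which `y'' = c y`, `y' + y = 0` at `0` and at `T` has a solution that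
does not vanish identically on `[0, T]`. -/
def robinSpectrum (T : ℝ) : Set ℝ :=
  {c | c = 1 ∨ ∃ m : ℕ, 1 ≤ m ∧ c = -((m : ℝ) * π / T) ^ 2}

theorem mem_robinSpectrum_of_solvesSecondOrderOn {c T : ℝ} {y y' : ℝ → ℝ} (hT : 0 < T)
    (hy : SolvesSecondOrderOn c (Icc 0 T) y y') (hy₀ : y' 0 + y 0 = 0) (hyT : y' T + y T = 0)
    (hne : ∃ t ∈ Icc 0 T, y t ≠ 0) : c ∈ robinSpectrum T := by
  rcases lt_trichotomy c 0 with hc | rfl | hc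
  · obtain ⟨μ, hμ, rfl⟩ : ∃ μ > 0, c = -μ ^ 2 :=
      ⟨√(-c), sqrt_pos.2 (neg_pos.2 hc), by rw [sq_sqrt (neg_pos.2 hc).le]; ring⟩
    have hφ := (solvesSecondOrderOn_cos_sub_sin hμ.ne').mono (subset_univ (Icc 0 T))
    have h := hφ.robin_right_of_robin (by simp) (by simp) hy hy₀ hyT hne
    have hsin : sin (μ * T) = 0 := by
      have : (μ + 1 / μ) * sin (μ * T) = 0 := by linear_combination -h
      exact (mul_eq_zero.1 this).resolve_left (add_pos hμ (one_div_pos.2 hμ)).ne'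
    obtain ⟨m, hm⟩ := sin_eq_zero_iff.1 hsin
    have hm_pos : 0 < m := by
      have : (0 : ℝ) < m * π := by rw [hm]; positivity
      exact_mod_cast pos_of_mul_pos_left this pi_pos.le
    refine Or.inr ⟨m.toNat, by omega, ?_⟩
    rw [show ((m.toNat : ℕ) : ℝ) = m by exact_mod_cast Int.toNat_of_nonneg hm_pos.le, hm]
    field_simp
  · have h := (solvesSecondOrderOn_one_sub.mono (subset_univ _)).robin_right_of_robin
      (by simp) (by simp) hy hy₀ hyT hne
    linarith
  · obtain ⟨μ, hμ, rfl⟩ : ∃ μ > 0, c = μ ^ 2 := ⟨√c, sqrt_pos.2 hc, (sq_sqrt hc.le).symm⟩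
    have hφ := (solvesSecondOrderOn_cosh_sub_sinh hμ.ne').mono (subset_univ (Icc 0 T))
    have h := hφ.robin_right_of_robin (by simp) (by simp) hy hy₀ hyT hne
    have hμ1 : μ - 1 / μ = 0 := by
      have : (μ - 1 / μ) * sinh (μ * T) = 0 := by linear_combination h
      exact (mul_eq_zero.1 this).resolve_right (sinh_pos_iff.2 (mul_pos hμ hT)).ne'
    left
    field_simp at hμ1
    nlinarith

theorem exists_robin_solution {c T : ℝ} (hT : 0 < T) (hc : c ∈ robinSpectrum T) :
    ∃ φ φ' : ℝ → ℝ, SolvesSecondOrderOn c univ φ φ' ∧ φ' 0 + φ 0 = 0 ∧ φ' T + φ T = 0 ∧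
      φ 0 ≠ 0 := by
  rcases hc with rfl | ⟨m, hm, rfl⟩
  · refine ⟨_, _, by simpa using solvesSecondOrderOn_cosh_sub_sinh one_ne_zero, ?_, ?_, ?_⟩ <;>
      simp
  · have hμ : (m : ℝ) * π / T ≠ 0 :=
      div_ne_zero (mul_ne_zero (by positivity) pi_ne_zero) hT.ne'
    refine ⟨_, _, solvesSecondOrderOn_cos_sub_sin hμ, by simp, ?_, by simp⟩
    have hsin : sin ((m : ℝ) * π / T * T) = 0 := by
      rw [div_mul_cancel₀ _ hT.ne']; exact sin_nat_mul_pi m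
    simp only [hsin]
    ring

theorem contDiff_uncurry_deriv_left {u : ℝ → ℝ → ℝ} {n : ℕ}
    (hu : ContDiff ℝ (n + 1) (uncurry u)) :
    ContDiff ℝ n (uncurry fun t θ => deriv (fun x => u x θ) t) := by
  have h : (uncurry fun t θ => deriv (fun x => u x θ) t) =
      fun p => fderiv ℝ (uncurry u) p (1, 0) := by
    funext ⟨t, θ⟩
    exact ((hu.differentiable (by simp) (t, θ)).hasFDerivAt.comp_hasDerivAt t
      ((hasDerivAt_id t).prodMk (hasDerivAt_const t θ))).deriv
  rw [h]
  exact (hu.fderiv_right le_rfl).clm_apply contDiff_const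

theorem hasDerivAt_integral_mul {G : ℝ → ℝ → ℝ} (hG : ContDiff ℝ 1 (uncurry G)) {w : ℝ → ℝ}
    (hw : Continuous w) (a b t : ℝ) :
    HasDerivAt (fun s => ∫ θ in a..b, G s θ * w θ)
      (∫ θ in a..b, deriv (fun x => G x θ) t * w θ) t := by
  set G' := fun t θ => deriv (fun x => G x θ) t
  have hG'c : Continuous (uncurry G') := (contDiff_uncurry_deriv_left (n := 0) hG).continuous
  have hGc : Continuous (uncurry G) := hG.continuous
  obtain ⟨C, hC⟩ := (isCompact_Icc.prod isCompact_uIcc).exists_bound_of_continuousOn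
    ((hG'c.mul (hw.comp continuous_snd)).continuousOn
      (s := Icc (t - 1) (t + 1) ×ˢ uIcc a b))
  refine (hasDerivAt_integral_of_dominated_loc_of_deriv_le (μ := volume) (bound := fun _ => C)
    (F := fun s θ => G s θ * w θ) (F' := fun s θ => G' s θ * w θ)
    (Metric.ball_mem_nhds t one_pos) ?_ ?_ ?_ ?_ intervalIntegrable_const ?_).2
  · exact Filter.Eventually.of_forall fun s =>
      ((hGc.comp (continuous_const.prodMk continuous_id)).mul hw).aestronglyMeasurable
  · exact ((hGc.comp (continuous_const.prodMk continuous_id)).mul hw).intervalIntegrable _ _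
  · exact ((hG'c.comp (continuous_const.prodMk continuous_id)).mul hw).aestronglyMeasurable
  · refine .of_forall fun θ hθ s hs => hC (s, θ) ⟨?_, uIoc_subset_uIcc hθ⟩
    rw [Metric.mem_ball, dist_eq, abs_lt] at hs
    constructor <;> linarith
  · refine .of_forall fun θ _ s _ => HasDerivAt.mul_const ?_ (w θ)
    exact ((hG.differentiable one_ne_zero (s, θ)).comp (g := uncurry G) s
      ((hasDerivAt_id' s).prodMk (hasDerivAt_const s θ)).differentiableAt).hasDerivAt

theorem integral_deriv_deriv_mul_eq {c a b : ℝ} {g g' g'' w w' : ℝ → ℝ}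
    (hg : ∀ x, HasDerivAt g (g' x) x) (hg' : ∀ x, HasDerivAt g' (g'' x) x)
    (hg'' : Continuous g'') (hw : SolvesSecondOrderOn c univ w w')
    (hbd : g' b * w b - g b * w' b = g' a * w a - g a * w' a) :
    ∫ x in a..b, g'' x * w x = c * ∫ x in a..b, g x * w x := by
  have hgc : Continuous g := continuous_iff_continuousAt.2 fun x => (hg x).continuousAt
  have hwc : Continuous w := continuous_iff_continuousAt.2 fun x => (hw x trivial).1.continuousAt
  have hF : ∀ x ∈ uIcc a b, HasDerivAt (fun x => g' x * w x - g x * w' x)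
      (g'' x * w x - c * (g x * w x)) x := fun x _ =>
    (((hg' x).mul (hw x trivial).1).sub ((hg x).mul (hw x trivial).2)).congr_deriv (by ring)
  have i₁ : IntervalIntegrable (fun x => g'' x * w x) volume a b :=
    (hg''.mul hwc).intervalIntegrable _ _
  have i₂ : IntervalIntegrable (fun x => c * (g x * w x)) volume a b :=
    (continuous_const.mul (hgc.mul hwc)).intervalIntegrable _ _
  have h := integral_eq_sub_of_hasDerivAt hF (i₁.sub i₂)
  rw [hbd, sub_self, integral_sub i₁ i₂, intervalIntegral.integral_const_mul] at h
  linarith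

theorem Function.Periodic.integral_deriv_deriv_mul_cos {g : ℝ → ℝ} (hper : Periodic g (2 * π))
    (hg : ContDiff ℝ 2 g) (n : ℕ) (ψ : ℝ) :
    ∫ θ in 0..2 * π, deriv (deriv g) θ * cos (n * θ + ψ) =
      -(n : ℝ) ^ 2 * ∫ θ in 0..2 * π, g θ * cos (n * θ + ψ) := by
  have hg' : ContDiff ℝ 1 (deriv g) := hg.deriv'
  have hper' : Periodic (deriv g) (2 * π) := fun x => by
    rw [← deriv_comp_add_const, hper.funext]
  refine integral_deriv_deriv_mul_eq (fun x => (hg.differentiable two_ne_zero x).hasDerivAt)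
    (fun x => (hg'.differentiable one_ne_zero x).hasDerivAt) (hg'.continuous_deriv le_rfl)
    (solvesSecondOrderOn_cos n ψ) ?_
  have h₀ := hper 0
  have h₀' := hper' 0
  rw [zero_add] at h₀ h₀'
  show deriv g (2 * π) * cos (n * (2 * π) + ψ) - g (2 * π) * (-n * sin (n * (2 * π) + ψ)) =
    deriv g 0 * cos (n * 0 + ψ) - g 0 * (-n * sin (n * 0 + ψ))
  rw [h₀, h₀', add_comm _ ψ, cos_add_nat_mul_two_pi, sin_add_nat_mul_two_pi, mul_zero, zero_add]

theorem eqOn_zero_of_fourierCoeffOn_eq_zero {a b : ℝ} (hab : a < b) {f : ℝ → ℂ}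
    (hf : Continuous f) (h : ∀ n, fourierCoeffOn hab f n = 0) : EqOn f 0 (Ioc a b) := by
  obtain ⟨C, hC⟩ := isCompact_Icc.exists_bound_of_continuousOn (hf.continuousOn (s := Icc a b))
  have hL2 : MemLp f 2 (volume.restrict (Ioc a b)) :=
    .of_bound hf.aestronglyMeasurable C
      ((ae_restrict_iff' measurableSet_Ioc).2
        (.of_forall fun x hx => hC x (Ioc_subset_Icc_self hx)))
  have hsq : ∫ x in a..b, ‖f x‖ ^ 2 = 0 := by
    have := tsum_sq_fourierCoeffOn hab hL2
    simpa [h, sub_ne_zero.2 hab.ne'] using this.symm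
  have hcont : Continuous fun x => ‖f x‖ ^ 2 := by fun_prop
  have hae := (integral_eq_zero_iff_of_le_of_nonneg_ae hab.le
    (.of_forall fun x => by positivity) (hcont.intervalIntegrable a b)).1 hsq
  intro x hx
  have := Measure.eqOn_Ioc_of_ae_eq _ hae hcont.continuousOn continuousOn_const hx
  simpa using this

theorem fourierCoeffOn_ofReal_eq_zero {f : ℝ → ℝ} (hf : Continuous f)
    (h : ∀ (n : ℤ) (ψ : ℝ), ∫ θ in 0..2 * π, f θ * cos (n * θ + ψ) = 0) (n : ℤ) :
    fourierCoeffOn two_pi_pos (fun x => (f x : ℂ)) n = 0 := by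
  -- `exp (i α) = cos α + i cos (α - π / 2)`
  have hexp : ∀ x : ℝ, fourier (-n) (x : AddCircle (2 * π - 0)) • (f x : ℂ) =
      ((f x * cos ((-n : ℤ) * x + 0) : ℝ) : ℂ)
        + ((f x * cos ((-n : ℤ) * x + -(π / 2)) : ℝ) : ℂ) * Complex.I := by
    intro x
    have hπ : (π : ℂ) ≠ 0 := Complex.ofReal_ne_zero.2 pi_ne_zero
    have harg : 2 * π * Complex.I * (-n : ℤ) * x / (2 * π - 0 : ℝ) =
        (((-n : ℤ) * x : ℝ) : ℂ) * Complex.I := by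
      push_cast; field_simp; ring
    rw [fourier_coe_apply, harg, Complex.exp_mul_I, ← Complex.ofReal_cos, ← Complex.ofReal_sin,
      ← sub_eq_add_neg, cos_sub_pi_div_two, add_zero, smul_eq_mul]
    push_cast
    ring
  rw [fourierCoeffOn_eq_integral, integral_congr fun x _ => hexp x,
    intervalIntegral.integral_add (by apply Continuous.intervalIntegrable; fun_prop)
      (by apply Continuous.intervalIntegrable; fun_prop),
    intervalIntegral.integral_mul_const, intervalIntegral.integral_ofReal,
    intervalIntegral.integral_ofReal, h, h]
  simp

theorem exists_integral_mul_cos_ne_zero {f : ℝ → ℝ} (hf : Continuous f)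
    (hper : Periodic f (2 * π)) {θ₀ : ℝ} (h : f θ₀ ≠ 0) :
    ∃ (n : ℕ) (ψ : ℝ), ∫ θ in 0..2 * π, f θ * cos (n * θ + ψ) ≠ 0 := by
  by_contra! hcon
  have hcosZ : ∀ (n : ℤ) (ψ : ℝ), ∫ θ in 0..2 * π, f θ * cos (n * θ + ψ) = 0 := by
    intro n ψ
    obtain ⟨m, rfl | rfl⟩ := Int.eq_nat_or_neg n
    · exact_mod_cast hcon m ψ
    · refine (integral_congr fun θ _ => ?_).trans (hcon m (-ψ))
      simp only [Int.cast_neg, Int.cast_natCast]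
      rw [← cos_neg]
      ring_nf
  obtain ⟨y, hy, hfy⟩ := hper.exists_mem_Ioc two_pi_pos θ₀ 0
  rw [zero_add] at hy
  have hzero := eqOn_zero_of_fourierCoeffOn_eq_zero two_pi_pos
    (Complex.continuous_ofReal.comp hf) (fourierCoeffOn_ofReal_eq_zero hf hcosZ) hy
  exact h (by simpa [hfy] using hzero)

/-- With `a = 1 / (1 + r²)`, `b = 1 / r²` and `k = ϖ + λ` this is the eigenvalue problem of the
Jacobi operator on the Killing cylinder with the capillary (Robin) boundary condition. -/
def IsRobinEigenfunction (a b k T : ℝ) (u : ℝ → ℝ → ℝ) : Prop :=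
  ContDiff ℝ 2 (uncurry u) ∧
  (∀ t θ : ℝ, u t (θ + 2 * π) = u t θ) ∧
  (∃ t ∈ Icc (0 : ℝ) T, ∃ θ : ℝ, u t θ ≠ 0) ∧
  (∀ t ∈ Icc (0 : ℝ) T, ∀ θ : ℝ,
    a * deriv (deriv (fun x => u x θ)) t + b * deriv (deriv (u t)) θ + k * u t θ = 0) ∧
  (∀ θ : ℝ, deriv (fun x => u x θ) 0 + u 0 θ = 0 ∧ deriv (fun x => u x θ) T + u T θ = 0)

theorem solvesSecondOrderOn_integral_mul_cos {a b k T : ℝ} (ha : a ≠ 0) {u : ℝ → ℝ → ℝ}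
    (hu : ContDiff ℝ 2 (uncurry u)) (hper : ∀ t θ, u t (θ + 2 * π) = u t θ)
    (hpde : ∀ t ∈ Icc 0 T, ∀ θ,
      a * deriv (deriv (fun x => u x θ)) t + b * deriv (deriv (u t)) θ + k * u t θ = 0)
    (n : ℕ) (ψ : ℝ) :
    SolvesSecondOrderOn ((b * n ^ 2 - k) / a) (Icc 0 T)
      (fun t => ∫ θ in 0..2 * π, u t θ * cos (n * θ + ψ))
      (fun t => ∫ θ in 0..2 * π, deriv (fun x => u x θ) t * cos (n * θ + ψ)) := by
  intro t ht
  have hwc : Continuous fun θ : ℝ => cos (n * θ + ψ) := by fun_prop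
  have hut : ContDiff ℝ 1 (uncurry fun t θ => deriv (fun x => u x θ) t) :=
    contDiff_uncurry_deriv_left (n := 1) hu
  have hslice : ∀ {F : ℝ → ℝ → ℝ}, Continuous (uncurry F) → Continuous (F t) :=
    fun hF => hF.comp (continuous_const.prodMk continuous_id)
  have hutt := hslice (contDiff_uncurry_deriv_left (n := 0) hut).continuous
  have hu_t : ContDiff ℝ 2 (u t) := hu.comp (contDiff_const.prodMk contDiff_id)
  have huθθ : Continuous (deriv (deriv (u t))) :=
    (hu_t.deriv' (n := 1)).continuous_deriv le_rfl
  have hgreen := Periodic.integral_deriv_deriv_mul_cos (hper t) hu_t n ψ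
  refine ⟨hasDerivAt_integral_mul (hu.of_le one_le_two) hwc 0 (2 * π) t, ?_⟩
  convert hasDerivAt_integral_mul hut hwc 0 (2 * π) t using 1
  have hint : ∀ {f : ℝ → ℝ}, Continuous f →
      IntervalIntegrable (fun θ => f θ * cos (n * θ + ψ)) volume 0 (2 * π) :=
    fun hf => (hf.mul hwc).intervalIntegrable _ _
  have hsum : a * (∫ θ in 0..2 * π, deriv (deriv (fun x => u x θ)) t * cos (n * θ + ψ))
      + b * (∫ θ in 0..2 * π, deriv (deriv (u t)) θ * cos (n * θ + ψ))
      + k * (∫ θ in 0..2 * π, u t θ * cos (n * θ + ψ)) = 0 := by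
    simp only [← intervalIntegral.integral_const_mul]
    rw [← intervalIntegral.integral_add ((hint hutt).const_mul a) ((hint huθθ).const_mul b),
      ← intervalIntegral.integral_add (((hint hutt).const_mul a).add ((hint huθθ).const_mul b))
        ((hint (hslice hu.continuous)).const_mul k)]
    refine (integral_congr fun θ _ => ?_).trans integral_zero
    linear_combination cos (n * θ + ψ) * hpde t ht θ
  rw [hgreen] at hsum
  field_simp
  linear_combination -hsum

theorem isRobinEigenfunction_mul_cos {a b k T : ℝ} (ha : a ≠ 0) (hT : 0 ≤ T) (n : ℕ)
    {φ φ' : ℝ → ℝ} (hφ : SolvesSecondOrderOn ((b * n ^ 2 - k) / a) univ φ φ')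
    (hφ₀ : φ' 0 + φ 0 = 0) (hφT : φ' T + φ T = 0) (hφne : φ 0 ≠ 0) :
    IsRobinEigenfunction a b k T fun t θ => φ t * cos (n * θ) := by
  have hderiv : ∀ s θ, deriv (fun x => φ x * cos (n * θ)) s = φ' s * cos (n * θ) :=
    fun s θ => ((hφ s trivial).1.mul_const _).deriv
  refine ⟨?_, fun t θ => ?_, ⟨0, ⟨le_rfl, hT⟩, 0, by simpa using hφne⟩, fun t _ θ => ?_,
    fun θ => ⟨?_, ?_⟩⟩
  · exact (hφ.contDiff_two.comp contDiff_fst).mul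
      (contDiff_cos.comp (contDiff_const.mul contDiff_snd))
  · change φ t * cos (n * (θ + 2 * π)) = φ t * cos (n * θ)
    rw [mul_add, cos_add_nat_mul_two_pi]
  · have hθ := ((solvesSecondOrderOn_cos n 0).const_mul (φ t)).deriv_deriv θ
    simp only [add_zero] at hθ
    rw [(hφ.mul_const _).deriv_deriv t, hθ]
    field_simp
    ring
  · rw [hderiv]; linear_combination cos (n * θ) * hφ₀
  · rw [hderiv]; linear_combination cos (n * θ) * hφT

theorem exists_isRobinEigenfunction_iff {a b k T : ℝ} (ha : a ≠ 0) (hT : 0 < T) :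
    (∃ u, IsRobinEigenfunction a b k T u) ↔ ∃ n : ℕ, (b * n ^ 2 - k) / a ∈ robinSpectrum T := by
  constructor
  · rintro ⟨u, hu, hper, ⟨t₀, ht₀, θ₀, hne⟩, hpde, hrob⟩
    have hslice : ∀ t, Continuous (u t) :=
      fun t => hu.continuous.comp (continuous_const.prodMk continuous_id)
    obtain ⟨n, ψ, hn⟩ := exists_integral_mul_cos_ne_zero (hslice t₀) (hper t₀) hne
    have hrobin : ∀ s, (∀ θ, deriv (fun x => u x θ) s + u s θ = 0) →
        (∫ θ in 0..2 * π, deriv (fun x => u x θ) s * cos (n * θ + ψ))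
          + ∫ θ in 0..2 * π, u s θ * cos (n * θ + ψ) = 0 := by
      intro s hs
      have hut : Continuous fun θ => deriv (fun x => u x θ) s :=
        (contDiff_uncurry_deriv_left (n := 0) (hu.of_le one_le_two)).continuous.comp
          (continuous_const.prodMk continuous_id)
      have hwc : Continuous fun θ : ℝ => cos (n * θ + ψ) := by fun_prop
      have i₁ : IntervalIntegrable (fun θ => deriv (fun x => u x θ) s * cos (n * θ + ψ))
          volume 0 (2 * π) := (hut.mul hwc).intervalIntegrable _ _
      have i₂ : IntervalIntegrable (fun θ => u s θ * cos (n * θ + ψ)) volume 0 (2 * π) :=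
        ((hslice s).mul hwc).intervalIntegrable _ _
      rw [← intervalIntegral.integral_add i₁ i₂]
      refine (integral_congr fun θ _ => ?_).trans integral_zero
      linear_combination cos (n * θ + ψ) * hs θ
    exact ⟨n, mem_robinSpectrum_of_solvesSecondOrderOn hT
      (solvesSecondOrderOn_integral_mul_cos ha hu hper hpde n ψ)
      (hrobin 0 fun θ => (hrob θ).1) (hrobin T fun θ => (hrob θ).2) ⟨t₀, ht₀, hn⟩⟩
  · rintro ⟨n, hn⟩
    obtain ⟨φ, φ', hφ, hφ₀, hφT, hφne⟩ := exists_robin_solution hT hn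
    exact ⟨_, isRobinEigenfunction_mul_cos ha hT.le n hφ hφ₀ hφT hφne⟩

theorem separation_constant_eq_one_iff {r lam : ℝ} (hr : r ≠ 0) (n : ℕ) :
    (1 / r ^ 2 * n ^ 2 - (1 / (r ^ 2 * (1 + r ^ 2)) + lam)) / (1 / (1 + r ^ 2)) = 1 ↔
      lam = ((n : ℝ) ^ 2 - 1) / r ^ 2 := by
  have h1r : 1 + r ^ 2 ≠ 0 := by positivity
  rw [div_eq_iff (by simpa using h1r), eq_div_iff (pow_ne_zero 2 hr)]
  constructor <;> intro h
  · field_simp at h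
    apply mul_left_cancel₀ h1r
    linear_combination -h
  · field_simp
    linear_combination (-(1 + r ^ 2)) * h

theorem separation_constant_eq_neg_sq_iff {r T lam : ℝ} (hr : r ≠ 0) (hT : T ≠ 0) (m n : ℕ) :
    (1 / r ^ 2 * n ^ 2 - (1 / (r ^ 2 * (1 + r ^ 2)) + lam)) / (1 / (1 + r ^ 2)) =
        -((m : ℝ) * π / T) ^ 2 ↔
      lam = (m : ℝ) ^ 2 * π ^ 2 / ((1 + r ^ 2) * T ^ 2)
          + ((n : ℝ) ^ 2 * (1 + r ^ 2) - 1) / (r ^ 2 * (1 + r ^ 2)) := by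
  have h1r : 1 + r ^ 2 ≠ 0 := by positivity
  constructor <;> intro h
  · field_simp at h
    field_simp
    linear_combination -h
  · field_simp
    field_simp at h
    linear_combination -h

/-- spectrum of the Jacobi operator of a truncated Killing
cylinder `C_R^T` in hyperbolic 3-space as capillary surface supported on two
horospheres (Robin boundary conditions): an eigenfunction exists iff
`λ ∈ {(n²−1)/r² : n ∈ ℕ} ∪ {m²π²/((1+r²)T²) + (n²(1+r²)−1)/(r²(1+r²)) : m ≥ 1, n ∈ ℕ}`. -/
theorem killing_cylinder_horosphere_spectrum
    (r T lam : ℝ) (hr : 0 < r) (hT : 0 < T) :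
    (∃ u : ℝ → ℝ → ℝ,
      ContDiff ℝ 2 (Function.uncurry u) ∧
      (∀ t θ : ℝ, u t (θ + 2 * π) = u t θ) ∧
      (∃ t ∈ Set.Icc (0 : ℝ) T, ∃ θ : ℝ, u t θ ≠ 0) ∧
      (∀ t ∈ Set.Icc (0 : ℝ) T, ∀ θ : ℝ,
        (1 / (1 + r ^ 2)) * deriv (deriv (fun x => u x θ)) t
          + (1 / r ^ 2) * deriv (deriv (u t)) θ
          + (1 / (r ^ 2 * (1 + r ^ 2)) + lam) * u t θ = 0) ∧
      (∀ θ : ℝ, deriv (fun x => u x θ) 0 + u 0 θ = 0 ∧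
        deriv (fun x => u x θ) T + u T θ = 0)) ↔
    ((∃ n : ℕ, lam = ((n : ℝ) ^ 2 - 1) / r ^ 2) ∨
      (∃ m n : ℕ, 1 ≤ m ∧
        lam = (m : ℝ) ^ 2 * π ^ 2 / ((1 + r ^ 2) * T ^ 2)
          + ((n : ℝ) ^ 2 * (1 + r ^ 2) - 1) / (r ^ 2 * (1 + r ^ 2)))) := by
  refine (exists_isRobinEigenfunction_iff (by positivity) hT).trans ⟨?_, ?_⟩
  · rintro ⟨n, hn | ⟨m, hm, hn⟩⟩
    · exact .inl ⟨n, (separation_constant_eq_one_iff hr.ne' n).1 hn⟩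
    · exact .inr ⟨m, n, hm, (separation_constant_eq_neg_sq_iff hr.ne' hT.ne' m n).1 hn⟩
  · rintro (⟨n, hn⟩ | ⟨m, n, hm, hn⟩)
    · exact ⟨n, .inl ((separation_constant_eq_one_iff hr.ne' n).2 hn)⟩
    · exact ⟨n, .inr ⟨m, hm, (separation_constant_eq_neg_sq_iff hr.ne' hT.ne' m n).2 hn⟩⟩
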